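/- Let L ∈ T with root system R. Then for every β ∈ R and every non-isotropic α ∈ R, -4 ≤ 2(β,α)/(α,α) ≤ 4. -/

import Mathlib

open scoped Classical

namespace Gen

variable (F L : Type*) [Field F] [CharZero F] [LieRing L] [LieAlgebra F L]

/-- The weight space of a linear functional `α` on a subalgebra `H`. -/
def wt (H : LieSubalgebra F L) (α : Module.Dual F H) : Submodule F L where
  carrier := {x : L | ∀ h : H, ⁅(h : L), x⁆ = α h • x}
  add_mem' := by
    intro a b ha hb h
    rw [lie_add, ha h, hb h, smul_add]
  zero_mem' := by intro h; simp
  smul_mem' := by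
    intro c x hx h
    rw [lie_smul, hx h, smul_comm]

/-- Data for axioms (T1) and (T2): a non-degenerate symmetric invariant bilinear form,
a finite dimensional split toral subalgebra `H` on which the form is non-degenerate,
together with the representatives `t_α ∈ H` of linear functionals on `H`. -/
structure TData where
  B : L →ₗ[F] L →ₗ[F] F
  bsymm : ∀ x y, B x y = B y x
  binv : ∀ x y z, B ⁅x, y⁆ z = B x ⁅y, z⁆
  bnondeg : ∀ x, (∀ y, B x y = 0) → x = 0
  H : LieSubalgebra F L
  hne : H ≠ ⊥
  hfin : FiniteDimensional F H
  hnondeg : ∀ h : H, (∀ h' : H, B h h' = 0) → h = 0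
  decomp : DirectSum.IsInternal (wt F L H)
  t : Module.Dual F H → H
  tspec : ∀ (α : Module.Dual F H) (h : H), B (t α) h = α h

variable {F L}

namespace TData

variable (T : TData F L)

/-- The form transferred to the dual of `H`: `(α, β) = (t_α, t_β)`. -/
def pr (α β : Module.Dual F T.H) : F := T.B (T.t α) (T.t β)

/-- The root system `R = {α : L_α ≠ 0}`. -/
def R : Set (Module.Dual F T.H) := {α | wt F L T.H α ≠ ⊥}

/-- Non-isotropic roots. -/
def Rx : Set (Module.Dual F T.H) := {α | α ∈ T.R ∧ T.pr α α ≠ 0}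

/-- Isotropic roots. -/
def R0 : Set (Module.Dual F T.H) := {α | α ∈ T.R ∧ T.pr α α = 0}

/-- The core: the subalgebra generated by the non-isotropic root spaces. -/
def core : LieSubalgebra F L :=
  LieSubalgebra.lieSpan F L (⋃ α ∈ T.Rx, (wt F L T.H α : Set L))

end TData

variable (F L)

/-- A Lie algebra in the class 𝒯: axioms (T1)–(T6). -/
structure TAlg extends TData F L where
  t3a : ∀ δ ∈ toTData.R0, ∃ x ∈ wt F L toTData.H δ, ∃ y ∈ wt F L toTData.H (-δ),
          ⁅x, y⁆ = (toTData.t δ : L)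
  t3b : ∀ α ∈ toTData.Rx, ∀ x ∈ wt F L toTData.H α, x ≠ 0 →
          ∃ y ∈ wt F L toTData.H (-α), ⁅x, y⁆ = (toTData.t α : L)
  t4 : ∀ α ∈ toTData.Rx, ∀ x ∈ wt F L toTData.H α, ∀ y : L,
          ∃ n : ℕ, ((LieAlgebra.ad F L x) ^ n) y = 0
  t5a : ∀ S1 S2 : Set (Module.Dual F toTData.H), S1.Nonempty → S2.Nonempty →
          S1 ∪ S2 = toTData.Rx → Disjoint S1 S2 →
          ∃ a ∈ S1, ∃ b ∈ S2, toTData.pr a b ≠ 0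
  t5b : ∀ δ ∈ toTData.R0, ∃ α ∈ toTData.Rx, α + δ ∈ toTData.R
  t6free : Module.Free ℤ (AddSubgroup.closure toTData.R0)
  t6fin : Module.Finite ℤ (AddSubgroup.closure toTData.R0)

end Gen

/-!
For non-isotropic `α` and `0 ≠ x ∈ L_α`, axiom (T3) gives an `sl₂`-triple
`((2 / (α,α)) t_α, x, f)` with `f ∈ L_{-α}`, and (T4) makes `ad x` and `ad f` locally nilpotent.
Raising a root vector of `β` with `x` yields a primitive vector, whose weight is then a natural
number `n`; lowering it with `f` shows that `k = 2(β,α)/(α,α)` is an integer and that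
`β - jα ∈ R` for `0 ≤ j ≤ k`.

Suppose `k ≥ 5`. Then `2(α, β - 2α)/(β - 2α, β - 2α)` is an integer with numerator `(k - 4)(α,α)`;
as `(β,β)` is `0` or `k(α,α)/q` for an integer `q`, this forces `(β,β) = k(α,α)`. Now
`(β - 2α, β - 2α) = (4 - k)(α,α)`, the `(β - 2α)`-string through `β - 5α` has length `5` and so
contains `γ = β - 5α - 2(β - 2α) = -(α + β)`, but `2(α,γ)/(γ,γ) = -(k + 2)/(2k + 1)` is not an
integer.
Replacing `α` by `-α` bounds `k` from below.
-/

open LieModule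

namespace IsSl2Triple

variable {R L M : Type*} [CommRing R] [LieRing L] [LieAlgebra R L]
  [AddCommGroup M] [Module R M] [LieRingModule L M] [LieModule R L M] {h e f : L}

lemma exists_hasPrimitiveVectorWith_of_pow_toEnd_e_eq_zero (t : IsSl2Triple h e f) {v : M}
    {μ : R} (hv : v ≠ 0) (hμ : ⁅h, v⁆ = μ • v) {N : ℕ} (hN : (toEnd R L M e ^ N) v = 0) :
    ∃ m : ℕ, t.HasPrimitiveVectorWith ((toEnd R L M e ^ m) v) (μ + 2 * m) := by
  obtain ⟨m, hm, hm'⟩ := Nat.exists_not_and_succ_of_not_zero_of_exists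
    (p := fun n ↦ (toEnd R L M e ^ n) v = 0) hv ⟨N, hN⟩
  exact ⟨m, hm, t.lie_h_pow_toEnd_e hμ m, by rwa [lie_e_pow_toEnd_e]⟩

lemma HasPrimitiveVectorWith.exists_nat_of_pow_toEnd_f_eq_zero [IsDomain R] [CharZero R]
    [Module.IsTorsionFree R M] {t : IsSl2Triple h e f} {m : M} {μ : R}
    (P : t.HasPrimitiveVectorWith m μ) {N : ℕ} (hN : (toEnd R L M f ^ N) m = 0) :
    ∃ n : ℕ, μ = n := by
  obtain ⟨n, hn, hn'⟩ := Nat.exists_not_and_succ_of_not_zero_of_exists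
    (p := fun n ↦ (toEnd R L M f ^ n) m = 0) P.ne_zero ⟨N, hN⟩
  refine ⟨n, ?_⟩
  have := P.lie_e_pow_succ_toEnd_f n
  rw [hn', lie_zero, eq_comm, smul_eq_zero_iff_left hn, mul_eq_zero, sub_eq_zero] at this
  exact this.resolve_left (Nat.cast_add_one_ne_zero n)

end IsSl2Triple

namespace Gen

variable {F L : Type*} [Field F] [LieRing L] [LieAlgebra F L]

namespace TData

variable (T : TData F L)

lemma pr_eq_apply (α β : Module.Dual F T.H) : T.pr α β = α (T.t β) := T.tspec α (T.t β)

lemma pr_comm (α β : Module.Dual F T.H) : T.pr α β = T.pr β α := T.bsymm _ _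

@[simp]
lemma pr_add_left (α β γ : Module.Dual F T.H) : T.pr (α + β) γ = T.pr α γ + T.pr β γ := by
  simp [pr_eq_apply]

@[simp]
lemma pr_sub_left (α β γ : Module.Dual F T.H) : T.pr (α - β) γ = T.pr α γ - T.pr β γ := by
  simp [pr_eq_apply]

@[simp]
lemma pr_neg_left (α γ : Module.Dual F T.H) : T.pr (-α) γ = -T.pr α γ := by
  simp [pr_eq_apply]

@[simp]
lemma pr_nsmul_left (n : ℕ) (α γ : Module.Dual F T.H) : T.pr (n • α) γ = n * T.pr α γ := by
  simp [pr_eq_apply]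

@[simp]
lemma pr_add_right (α β γ : Module.Dual F T.H) : T.pr γ (α + β) = T.pr γ α + T.pr γ β := by
  simp [T.pr_comm γ]

@[simp]
lemma pr_sub_right (α β γ : Module.Dual F T.H) : T.pr γ (α - β) = T.pr γ α - T.pr γ β := by
  simp [T.pr_comm γ]

@[simp]
lemma pr_neg_right (α γ : Module.Dual F T.H) : T.pr γ (-α) = -T.pr γ α := by
  simp [T.pr_comm γ]

@[simp]
lemma pr_nsmul_right (n : ℕ) (α γ : Module.Dual F T.H) : T.pr γ (n • α) = n * T.pr γ α := by
  simp [T.pr_comm γ]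

lemma pr_sub_two_nsmul_self {α β : Module.Dual F T.H} {k : F}
    (hk : 2 * T.pr β α = k * T.pr α α) :
    T.pr (β - 2 • α) (β - 2 • α) = T.pr β β - (2 * k - 4) * T.pr α α := by
  simp only [pr_sub_left, pr_sub_right, pr_nsmul_left, pr_nsmul_right, T.pr_comm α β]
  push_cast
  linear_combination -2 * hk

lemma two_mul_pr_sub_two_nsmul {α β : Module.Dual F T.H} {k : F}
    (hk : 2 * T.pr β α = k * T.pr α α) :
    2 * T.pr α (β - 2 • α) = (k - 4) * T.pr α α := by
  simp only [pr_sub_right, pr_nsmul_right, T.pr_comm α β]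
  push_cast
  linear_combination hk

lemma t_ne_zero {α : Module.Dual F T.H} (hα : T.pr α α ≠ 0) : (T.t α : L) ≠ 0 := by
  intro h
  exact hα (by rw [pr, h, map_zero])

lemma lie_t_of_mem_wt {α γ : Module.Dual F T.H} {w : L} (hw : w ∈ wt F L T.H γ) :
    ⁅(T.t α : L), w⁆ = T.pr γ α • w := by
  rw [hw, pr_eq_apply]

lemma lie_mem_wt {α γ : Module.Dual F T.H} {x z : L} (hx : x ∈ wt F L T.H α)
    (hz : z ∈ wt F L T.H γ) : ⁅x, z⁆ ∈ wt F L T.H (α + γ) := by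
  intro h
  rw [leibniz_lie, hx h, hz h, smul_lie, lie_smul, LinearMap.add_apply, add_smul, add_comm]

lemma pow_toEnd_mem_wt {α β : Module.Dual F T.H} {x v : L} (hx : x ∈ wt F L T.H α)
    (hv : v ∈ wt F L T.H β) (n : ℕ) : (toEnd F L L x ^ n) v ∈ wt F L T.H (β + n • α) := by
  induction n with
  | zero => simpa using hv
  | succ n ih =>
    rw [pow_succ', Module.End.mul_apply, toEnd_apply_apply, succ_nsmul, ← add_assoc, add_comm]
    exact T.lie_mem_wt hx ih

lemma isSl2Triple_of_lie_eq_t [CharZero F] {α : Module.Dual F T.H} (hα : T.pr α α ≠ 0) {x y : L}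
    (hy : y ∈ wt F L T.H (-α)) (hx : x ∈ wt F L T.H α) (hxy : ⁅x, y⁆ = (T.t α : L)) :
    IsSl2Triple ((2 / T.pr α α) • (T.t α : L)) x ((2 / T.pr α α) • y) where
  h_ne_zero := smul_ne_zero (div_ne_zero two_ne_zero hα) (T.t_ne_zero hα)
  lie_e_f := by rw [lie_smul, hxy]
  lie_h_e_nsmul := by
    rw [smul_lie, T.lie_t_of_mem_wt hx, smul_smul, div_mul_cancel₀ _ hα, ofNat_smul_eq_nsmul]
  lie_h_f_nsmul := by
    rw [smul_lie, lie_smul, T.lie_t_of_mem_wt hy, pr_neg_left]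
    match_scalars
    field_simp

end TData

lemma eq_one_of_mul_sub_four_eq {k q s : ℤ} (hk : 5 ≤ k) (hq : q ≠ 0)
    (h : q * (k - 4) = s * (k + q * (4 - 2 * k))) : q = 1 := by
  by_contra hq1
  rcases lt_or_gt_of_ne hq with hq | hq
  · have hD : 3 * k - 4 ≤ k + q * (4 - 2 * k) := by nlinarith
    rcases le_or_gt s (-1) with hs | hs
    · nlinarith [mul_nonpos_of_nonpos_of_nonneg (by linarith : s + 1 ≤ 0)
        (by linarith : 0 ≤ k + q * (4 - 2 * k))]
    · nlinarith [mul_nonneg (by linarith : 0 ≤ s) (by linarith : 0 ≤ k + q * (4 - 2 * k))]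
  · have hD : k + q * (4 - 2 * k) ≤ 8 - 3 * k := by nlinarith [(by omega : 2 ≤ q)]
    rcases le_or_gt s (-1) with hs | hs
    · nlinarith [mul_nonneg_of_nonpos_of_nonpos (by linarith : s + 1 ≤ 0)
        (by linarith : k + q * (4 - 2 * k) ≤ 0)]
    · nlinarith [mul_nonpos_of_nonneg_of_nonpos (by linarith : 0 ≤ s)
        (by linarith : k + q * (4 - 2 * k) ≤ 0)]

namespace TAlg

variable [CharZero F] (T : TAlg F L) {α β : Module.Dual F T.H}

lemma exists_isSl2Triple (hα : α ∈ T.Rx) {x : L} (hx : x ∈ wt F L T.H α) (hx0 : x ≠ 0) :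
    ∃ f ∈ wt F L T.H (-α), IsSl2Triple ((2 / T.pr α α) • (T.t α : L)) x f := by
  obtain ⟨y, hy, hxy⟩ := T.t3b α hα x hx hx0
  exact ⟨_, Submodule.smul_mem _ _ hy, T.isSl2Triple_of_lie_eq_t hα.2 hy hx hxy⟩

lemma neg_mem_Rx (hα : α ∈ T.Rx) : -α ∈ T.Rx := by
  obtain ⟨x, hx, hx0⟩ := Submodule.exists_mem_ne_zero_of_ne_bot hα.1
  obtain ⟨f, hf, t⟩ := T.exists_isSl2Triple hα hx hx0
  refine ⟨(Submodule.ne_bot_iff _).mpr ⟨f, hf, t.f_ne_zero⟩, ?_⟩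
  simpa using hα.2

theorem exists_string (hβ : β ∈ T.R) (hα : α ∈ T.Rx) :
    ∃ k : ℤ, 2 * T.pr β α = k * T.pr α α ∧ ∀ j : ℕ, (j : ℤ) ≤ k → β - j • α ∈ T.R := by
  obtain ⟨v, hv, hv0⟩ := Submodule.exists_mem_ne_zero_of_ne_bot hβ
  obtain ⟨x, hx, hx0⟩ := Submodule.exists_mem_ne_zero_of_ne_bot hα.1
  obtain ⟨f, hf, t⟩ := T.exists_isSl2Triple hα hx hx0
  have hhv : ⁅(2 / T.pr α α) • (T.t α : L), v⁆ = (2 / T.pr α α * T.pr β α) • v := by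
    rw [smul_lie, T.lie_t_of_mem_wt hv, smul_smul]
  obtain ⟨N, hN⟩ := T.t4 α hα x hx v
  obtain ⟨m, P⟩ := t.exists_hasPrimitiveVectorWith_of_pow_toEnd_e_eq_zero hv0 hhv hN
  have hw : (toEnd F L L x ^ m) v ∈ wt F L T.H (β + m • α) := T.pow_toEnd_mem_wt hx hv m
  obtain ⟨N', hN'⟩ := T.t4 (-α) (T.neg_mem_Rx hα) f hf ((toEnd F L L x ^ m) v)
  obtain ⟨n, hn⟩ := P.exists_nat_of_pow_toEnd_f_eq_zero hN'
  refine ⟨n - 2 * m, ?_, fun j hj ↦ ?_⟩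
  · field_simp [hα.2] at hn
    push_cast
    linear_combination hn
  · have hmem := T.pow_toEnd_mem_wt hf hw (m + j)
    rw [show β + m • α + (m + j) • -α = β - j • α by module] at hmem
    exact (Submodule.ne_bot_iff _).mpr
      ⟨_, hmem, P.pow_toEnd_f_ne_zero_of_eq_nat hn (by omega)⟩

lemma exists_cartan_int (hβ : β ∈ T.R) (hα : α ∈ T.Rx) :
    ∃ k : ℤ, 2 * T.pr β α = k * T.pr α α :=
  (T.exists_string hβ hα).imp fun _ ↦ And.left

lemma sub_nsmul_mem_R (hβ : β ∈ T.R) (hα : α ∈ T.Rx) {k : ℤ}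
    (hk : 2 * T.pr β α = k * T.pr α α) {j : ℕ} (hj : (j : ℤ) ≤ k) : β - j • α ∈ T.R := by
  obtain ⟨k', hk', hstring⟩ := T.exists_string hβ hα
  obtain rfl : k' = k := Int.cast_injective (mul_right_cancel₀ hα.2 (hk'.symm.trans hk))
  exact hstring j hj

lemma pr_self_ne_zero_of_five_le (hβ : β ∈ T.R) (hα : α ∈ T.Rx) {k : ℤ}
    (hk : 2 * T.pr β α = k * T.pr α α) (hk5 : 5 ≤ k) : T.pr β β ≠ 0 := by
  intro hb
  have ha := hα.2
  have hγγ : T.pr (β - 2 • α) (β - 2 • α) = ((4 - 2 * k : ℤ) : F) * T.pr α α := by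
    rw [T.pr_sub_two_nsmul_self hk, hb]; push_cast; ring
  obtain ⟨s, hs⟩ := T.exists_cartan_int hα.1
    ⟨T.sub_nsmul_mem_R hβ hα hk (j := 2) (by omega),
      hγγ ▸ mul_ne_zero (Int.cast_ne_zero.mpr (by omega)) ha⟩
  have hint : k - 4 = s * (4 - 2 * k) := Int.cast_injective <| mul_right_cancel₀ ha <| by
    rw [T.two_mul_pr_sub_two_nsmul hk, hγγ] at hs; push_cast at hs ⊢; linear_combination hs
  rcases lt_trichotomy s 0 with hs | rfl | hs <;> nlinarith

lemma pr_self_eq_of_five_le (hβ : β ∈ T.R) (hα : α ∈ T.Rx) {k : ℤ}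
    (hk : 2 * T.pr β α = k * T.pr α α) (hk5 : 5 ≤ k) : T.pr β β = k * T.pr α α := by
  have ha := hα.2
  obtain ⟨q, hq⟩ := T.exists_cartan_int hα.1 ⟨hβ, T.pr_self_ne_zero_of_five_le hβ hα hk hk5⟩
  rw [T.pr_comm α β] at hq
  have hqγγ : q * T.pr (β - 2 • α) (β - 2 • α) =
      ((k + q * (4 - 2 * k) : ℤ) : F) * T.pr α α := by
    rw [T.pr_sub_two_nsmul_self hk]; push_cast; linear_combination hk - hq
  have hD : k + q * (4 - 2 * k) ≠ 0 := by
    rcases le_or_gt q 0 with hq' | hq' <;> nlinarith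
  have hγ : β - 2 • α ∈ T.Rx := ⟨T.sub_nsmul_mem_R hβ hα hk (by omega), fun h0 ↦ by
    rw [h0, mul_zero, eq_comm] at hqγγ
    exact mul_ne_zero (Int.cast_ne_zero.mpr hD) ha hqγγ⟩
  obtain ⟨s, hs⟩ := T.exists_cartan_int hα.1 hγ
  have hq0 : q ≠ 0 := by
    rintro rfl
    rw [Int.cast_zero, zero_mul, hk] at hq
    exact mul_ne_zero (Int.cast_ne_zero.mpr (by omega)) ha hq
  have hint : q * (k - 4) = s * (k + q * (4 - 2 * k)) := Int.cast_injective <|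
    mul_right_cancel₀ ha <| by
      rw [T.two_mul_pr_sub_two_nsmul hk] at hs
      push_cast at hs hqγγ ⊢
      linear_combination q * hs + s * hqγγ
  rw [eq_one_of_mul_sub_four_eq hk5 hq0 hint, Int.cast_one, one_mul] at hq
  linear_combination hk - hq

theorem cartan_int_le_four (hβ : β ∈ T.R) (hα : α ∈ T.Rx) {k : ℤ}
    (hk : 2 * T.pr β α = k * T.pr α α) : k ≤ 4 := by
  by_contra! hk5
  have ha := hα.2
  have hb := T.pr_self_eq_of_five_le hβ hα hk (by omega)
  have hγ2 : β - 2 • α ∈ T.Rx := by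
    refine ⟨T.sub_nsmul_mem_R hβ hα hk (j := 2) (by omega), ?_⟩
    rw [T.pr_sub_two_nsmul_self hk, hb, ← sub_mul]
    exact mul_ne_zero (by norm_cast; omega) ha
  have h52 : 2 * T.pr (β - 5 • α) (β - 2 • α) =
      (5 : ℤ) * T.pr (β - 2 • α) (β - 2 • α) := by
    simp only [TData.pr_sub_left, TData.pr_sub_right, TData.pr_nsmul_left,
      TData.pr_nsmul_right, T.pr_comm α β]
    push_cast
    linear_combination -3 * hb + 3 * hk
  have hν : -(α + β) ∈ T.R := by
    have h5 : β - 5 • α ∈ T.R := T.sub_nsmul_mem_R hβ hα hk (j := 5) (by omega)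
    have := T.sub_nsmul_mem_R h5 hγ2 h52 (j := 2) (by norm_num)
    rwa [show β - 5 • α - 2 • (β - 2 • α) = -(α + β) by module] at this
  have hνν : T.pr (-(α + β)) (-(α + β)) = ((2 * k + 1 : ℤ) : F) * T.pr α α := by
    simp only [TData.pr_neg_left, TData.pr_neg_right, TData.pr_add_left, TData.pr_add_right,
      T.pr_comm α β]
    push_cast
    linear_combination hb + hk
  obtain ⟨m, hm⟩ := T.exists_cartan_int hα.1
    ⟨hν, hνν ▸ mul_ne_zero (Int.cast_ne_zero.mpr (by omega)) ha⟩
  have hint : -(k + 2) = m * (2 * k + 1) := Int.cast_injective <| mul_right_cancel₀ ha <| by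
    rw [hνν] at hm
    simp only [TData.pr_neg_right, TData.pr_add_right, T.pr_comm α β] at hm
    push_cast at hm ⊢
    linear_combination hm + hk
  rcases le_or_gt m (-1) with hm' | hm' <;> nlinarith

end TAlg

end Gen

theorem cartan_integer_bounded_general
    (F L : Type*) [Field F] [CharZero F] [LieRing L] [LieAlgebra F L]
    (T : Gen.TAlg F L) :
    ∀ β ∈ T.toTData.R, ∀ α ∈ T.toTData.Rx,
      ∃ n : ℤ, 2 * T.toTData.pr β α = (n : F) * T.toTData.pr α α ∧ -4 ≤ n ∧ n ≤ 4 := by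
  intro β hβ α hα
  obtain ⟨k, hk⟩ := T.exists_cartan_int hβ hα
  have hk_neg : 2 * T.pr β (-α) = ((-k : ℤ) : F) * T.pr (-α) (-α) := by
    simp only [Gen.TData.pr_neg_left, Gen.TData.pr_neg_right, neg_neg, Int.cast_neg]
    linear_combination -hk
  have h_neg := T.cartan_int_le_four hβ (T.neg_mem_Rx hα) hk_neg
  exact ⟨k, hk, by omega, T.cartan_int_le_four hβ hα hk⟩

/-- For `L ∈ 𝒯` (form normalized so `(α,α) = 1` for some non-isotropic
`α`), for all `β ∈ R` and non-isotropic `α ∈ R` the Cartan integer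
`2(β,α)/(α,α)` lies between `-4` and `4`. -/
theorem cartan_integer_bounded
    (F L : Type*) [Field F] [CharZero F] [LieRing L] [LieAlgebra F L]
    (T : Gen.TAlg F L)
    (hnorm : ∃ α ∈ T.toTData.Rx, T.toTData.pr α α = 1) :
    ∀ β ∈ T.toTData.R, ∀ α ∈ T.toTData.Rx,
      ∃ n : ℤ, 2 * T.toTData.pr β α = (n : F) * T.toTData.pr α α ∧ -4 ≤ n ∧ n ≤ 4 :=
  cartan_integer_bounded_general F L T
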